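/- (Claim 2 in the stability proof.) Let Z and Z' be finite nonempty subsets of metric spaces, let γ ≥ 0, and suppose there exists a correspondence R between Z and Z' with distortion dis(R) ≤ 2γ. Then for every ε ≥ 0, β₀^{ε}(Z') ≥ β₀^{ε+2γ}(Z), i.e., the number of connected components of the ε-neighborhood graph on Z' is at least the number of connected components of the (ε+2γ)-neighborhood graph on Z. -/

import Mathlib

/-- The ε-neighborhood graph on a finite subset `Z` of a metric space (the
1-skeleton of the Vietoris-Rips complex of `Z` at radius `ε`): edges join
distinct points at distance at most `ε`. -/
def nbhdGraph {X : Type*} [MetricSpace X] (Z : Finset X) (ε : ℝ) :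
    SimpleGraph {x // x ∈ Z} where
  Adj a b := a ≠ b ∧ dist a b ≤ ε
  symm := by
    constructor
    intro a b h
    exact ⟨h.1.symm, by rw [dist_comm]; exact h.2⟩
  loopless := by
    constructor
    intro a h
    exact h.1 rfl

/-- The 0-th Betti number of `Z` at radius `ε`: the number of connected
components of the ε-neighborhood graph. -/
noncomputable def betti0 {X : Type*} [MetricSpace X] (Z : Finset X) (ε : ℝ) : ℕ :=
  Nat.card (nbhdGraph Z ε).ConnectedComponent

/-- `R` is a correspondence between `Z` and `Z'`: a relation contained in
`Z × Z'` such that every point of `Z` is related to some point of `Z'` and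
vice versa. -/
def IsCorrespondence {X Y : Type*} [MetricSpace X] [MetricSpace Y]
    (Z : Finset X) (Z' : Finset Y) (R : Set (X × Y)) : Prop :=
  (∀ p ∈ R, p.1 ∈ Z ∧ p.2 ∈ Z') ∧
  (∀ z ∈ Z, ∃ z' ∈ Z', (z, z') ∈ R) ∧
  (∀ z' ∈ Z', ∃ z ∈ Z, (z, z') ∈ R)

/-- The distortion of a relation `R`:
`dis(R) = sup {|dist z₁ z₂ - dist z₁' z₂'| : (z₁, z₁') ∈ R, (z₂, z₂') ∈ R}`. -/
noncomputable def distortion {X Y : Type*} [MetricSpace X] [MetricSpace Y]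
    (R : Set (X × Y)) : ℝ :=
  sSup {c : ℝ | ∃ p ∈ R, ∃ q ∈ R, c = |dist p.1 q.1 - dist p.2 q.2|}

/-! A correspondence of distortion at most `δ` yields a map `f : Z' → Z` (send `z'` to some `z`
related to it) with `dist (f a) (f b) ≤ dist a b + δ` whose image is `δ`-dense in `Z`. Such a map
sends `ε`-edges of `Z'` to `(ε + δ)`-edges or single points of `Z`, so it induces a map on
connected components, which is onto by density. -/

namespace SimpleGraph

variable {V W : Type*} {G : SimpleGraph V} {H : SimpleGraph W}

theorem Reachable.map_of_adj {f : V → W} (hf : ∀ ⦃v w⦄, G.Adj v w → H.Reachable (f v) (f w))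
    {v w : V} (h : G.Reachable v w) : H.Reachable (f v) (f w) := by
  obtain ⟨p⟩ := h
  induction p with
  | nil => rfl
  | cons hadj _ ih => exact (hf hadj).trans ih

theorem card_connectedComponent_le_of_map [Finite V] (f : V → W)
    (hf : ∀ ⦃v w⦄, G.Adj v w → H.Reachable (f v) (f w)) (hcover : ∀ w, ∃ v, H.Reachable (f v) w) :
    Nat.card H.ConnectedComponent ≤ Nat.card G.ConnectedComponent := by
  let F : G.ConnectedComponent → H.ConnectedComponent :=
    Quot.lift (fun v => H.connectedComponentMk (f v)) fun _ _ h =>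
      ConnectedComponent.sound (h.map_of_adj hf)
  refine Nat.card_le_card_of_surjective F (ConnectedComponent.ind fun w => ?_)
  obtain ⟨v, hv⟩ := hcover w
  exact ⟨G.connectedComponentMk v, ConnectedComponent.sound hv⟩

end SimpleGraph

section

variable {X Y : Type*} [MetricSpace X] [MetricSpace Y]

theorem nbhdGraph_reachable_of_dist_le {Z : Finset X} {ε : ℝ} {a b : Z} (h : dist a b ≤ ε) :
    (nbhdGraph Z ε).Reachable a b := by
  by_cases hab : a = b
  · exact hab ▸ .rfl
  · exact SimpleGraph.Adj.reachable ⟨hab, h⟩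

theorem betti0_le_of_dist_le_add {Z : Finset X} {Z' : Finset Y} {ε δ : ℝ} (f : Z' → Z)
    (hf : ∀ a b, dist (f a) (f b) ≤ dist a b + δ) (hcover : ∀ x, ∃ a, dist (f a) x ≤ ε + δ) :
    betti0 Z (ε + δ) ≤ betti0 Z' ε :=
  SimpleGraph.card_connectedComponent_le_of_map f
    (fun a b hab => nbhdGraph_reachable_of_dist_le ((hf a b).trans (by linarith [hab.2])))
    (fun x => (hcover x).imp fun _ => nbhdGraph_reachable_of_dist_le)

theorem IsCorrespondence.finite {Z : Finset X} {Z' : Finset Y} {R : Set (X × Y)}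
    (hR : IsCorrespondence Z Z' R) : R.Finite :=
  (Z ×ˢ Z').finite_toSet.subset fun p hp => by simpa using hR.1 p hp

theorem dist_le_dist_add_distortion {R : Set (X × Y)} (hR : R.Finite) {a c : X} {b d : Y}
    (hab : (a, b) ∈ R) (hcd : (c, d) ∈ R) : dist a c ≤ dist b d + distortion R := by
  have hbdd : BddAbove {t : ℝ | ∃ p ∈ R, ∃ q ∈ R, t = |dist p.1 q.1 - dist p.2 q.2|} := by
    refine ((hR.prod hR).image fun pq : (X × Y) × (X × Y) =>
      |dist pq.1.1 pq.2.1 - dist pq.1.2 pq.2.2|).bddAbove.mono ?_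
    rintro _ ⟨p, hp, q, hq, rfl⟩
    exact ⟨(p, q), ⟨hp, hq⟩, rfl⟩
  have : dist a c - dist b d ≤ distortion R :=
    (le_abs_self _).trans (le_csSup hbdd ⟨(a, b), hab, (c, d), hcd, rfl⟩)
  linarith

end

theorem betti0_claim_two_general {X Y : Type*} [MetricSpace X] [MetricSpace Y]
    (Z : Finset X) (Z' : Finset Y)
    (γ : ℝ)
    (hcor : ∃ R : Set (X × Y), IsCorrespondence Z Z' R ∧ distortion R ≤ 2 * γ) :
    ∀ ε : ℝ, 0 ≤ ε → betti0 Z (ε + 2 * γ) ≤ betti0 Z' ε := by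
  intro ε hε
  obtain ⟨R, hR, hdis⟩ := hcor
  have hclose {a c : X} {b d : Y} (hab : (a, b) ∈ R) (hcd : (c, d) ∈ R) :
      dist a c ≤ dist b d + 2 * γ :=
    (dist_le_dist_add_distortion hR.finite hab hcd).trans (by linarith)
  choose g hgZ hgR using hR.2.2
  refine betti0_le_of_dist_le_add (fun a => ⟨g a a.2, hgZ a a.2⟩)
    (fun a b => hclose (hgR a a.2) (hgR b b.2)) fun x => ?_
  obtain ⟨y, hy, hxy⟩ := hR.2.1 x x.2
  have hyx : dist (g y hy) x ≤ 2 * γ := by simpa using hclose (hgR y hy) hxy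
  exact ⟨⟨y, hy⟩, hyx.trans (by linarith)⟩

/-- Claim 2 in the stability proof: if there is a correspondence between `Z`
and `Z'` of distortion at most `2γ`, then `β₀^ε(Z') ≥ β₀^{ε+2γ}(Z)` for every
`ε ≥ 0`. -/
theorem betti0_claim_two {X Y : Type*} [MetricSpace X] [MetricSpace Y]
    (Z : Finset X) (Z' : Finset Y) (hZ : Z.Nonempty) (hZ' : Z'.Nonempty)
    (γ : ℝ) (hγ : 0 ≤ γ)
    (hcor : ∃ R : Set (X × Y), IsCorrespondence Z Z' R ∧ distortion R ≤ 2 * γ) :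
    ∀ ε : ℝ, 0 ≤ ε → betti0 Z (ε + 2 * γ) ≤ betti0 Z' ε :=
  betti0_claim_two_general Z Z' γ hcor
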